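/- If a topological vector space N with central Hilbert space H forms a Gel'fand triple (with increasing compatible Hilbertian norms ‖·‖_p such that each inclusion N_{p+1} ↪ N_p is Hilbert–Schmidt), then s(N) := ⋂_{p≥0} ℓ²_p(N_p), where ℓ²_p(K) = {f : ℕ → K : ∑_k k^{2p}‖f_k‖²_K < ∞}, equipped with the norms of ℓ²_p(N_p), forms a Gel'fand triple s(N) ⊂ ℓ²(H) ⊂ s'(N); in particular each inclusion ℓ²_{p+1}(N_{p+1}) ↪ ℓ²_p(N_p) is Hilbert–Schmidt with Hilbert–Schmidt norm squared equal to ‖N_{p+1,p}‖²_HS · ∑_{l=1}^∞ l^{-2}. -/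

import Mathlib

/-!
Under the weight isometries `ℓ²_q(K) ≅ ℓ²(K)`, `f ↦ (l ^ q • f_l)`, the inclusion
`ℓ²_{p+1}(N_{p+1}) ↪ ℓ²_p(N_p)` becomes the diagonal operator `Φ g = (l⁻¹ • T g_l)_l` on plain
`ℓ²` (position `l` is stored at index `k = l - 1`). On the Hilbert basis `δ_k ⊗ e_i` of
`ℓ²(E)` one reads off `‖Φ (δ_k ⊗ e_i)‖² = (k+1)⁻² ‖T e_i‖²`, whose double sum is
`S · ∑ l⁻²`. The Hilbert–Schmidt sum does not depend on the basis: by Parseval, computed in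
`ℝ≥0∞` so that the double sum may be swapped freely, it equals `∑_j ‖Φ† f_j‖²` for any Hilbert
basis `(f_j)` of the target.
-/

noncomputable section
open scoped ENNReal InnerProductSpace InnerProduct NNReal

theorem hasSum_norm_sq_iff_tsum_enorm_sq {ι G : Type*} [SeminormedAddCommGroup G] (f : ι → G)
    (s : ℝ≥0) : HasSum (fun i => ‖f i‖ ^ 2) (s : ℝ) ↔ ∑' i, ‖f i‖ₑ ^ 2 = s := by
  rw [← ENNReal.summable.hasSum_iff]
  simp_rw [enorm_eq_nnnorm, ← ENNReal.coe_pow, ENNReal.hasSum_coe, ← NNReal.hasSum_coe]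
  push_cast
  rfl

section HilbertSchmidt

variable {𝕜 ι κ E F : Type*} [RCLike 𝕜]
  [NormedAddCommGroup E] [InnerProductSpace 𝕜 E] [NormedAddCommGroup F] [InnerProductSpace 𝕜 F]

theorem HilbertBasis.hasSum_norm_inner_sq (b : HilbertBasis ι 𝕜 E) (x : E) :
    HasSum (fun i => ‖⟪b i, x⟫_𝕜‖ ^ 2) (‖x‖ ^ 2) := by
  have h := lp.hasSum_norm (p := 2) (by norm_num) (b.repr x)
  simpa [b.repr_apply_apply] using h

theorem HilbertBasis.tsum_enorm_inner_sq (b : HilbertBasis ι 𝕜 E) (x : E) :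
    ∑' i, ‖⟪b i, x⟫_𝕜‖ₑ ^ 2 = ‖x‖ₑ ^ 2 := by
  have h := b.hasSum_norm_inner_sq x
  rw [← coe_nnnorm, ← NNReal.coe_pow, hasSum_norm_sq_iff_tsum_enorm_sq] at h
  rw [h, enorm_eq_nnnorm, ENNReal.coe_pow]

namespace ContinuousLinearMap

variable [CompleteSpace E] [CompleteSpace F]

theorem tsum_enorm_apply_sq_eq_adjoint (A : E →L[𝕜] F) (b : HilbertBasis ι 𝕜 E)
    (c : HilbertBasis κ 𝕜 F) : ∑' i, ‖A (b i)‖ₑ ^ 2 = ∑' j, ‖(A†) (c j)‖ₑ ^ 2 := calc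
  ∑' i, ‖A (b i)‖ₑ ^ 2 = ∑' i, ∑' j, ‖⟪c j, A (b i)⟫_𝕜‖ₑ ^ 2 := by
    simp_rw [c.tsum_enorm_inner_sq]
  _ = ∑' j, ∑' i, ‖⟪b i, (A†) (c j)⟫_𝕜‖ₑ ^ 2 := by
    rw [ENNReal.tsum_comm]
    congr! 4 with j i
    rw [← adjoint_inner_left, ← inner_conj_symm, RCLike.enorm_conj]
  _ = ∑' j, ‖(A†) (c j)‖ₑ ^ 2 := by
    simp_rw [b.tsum_enorm_inner_sq]

theorem tsum_enorm_apply_sq_eq_of_hilbertBasis (A : E →L[𝕜] F) (b : HilbertBasis ι 𝕜 E)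
    (b' : HilbertBasis κ 𝕜 E) : ∑' i, ‖A (b i)‖ₑ ^ 2 = ∑' j, ‖A (b' j)‖ₑ ^ 2 := by
  obtain ⟨_, c, _⟩ := exists_hilbertBasis 𝕜 F
  rw [A.tsum_enorm_apply_sq_eq_adjoint b c, A.tsum_enorm_apply_sq_eq_adjoint b' c]

theorem hasSum_norm_apply_sq_of_hilbertBasis (A : E →L[𝕜] F) {b : HilbertBasis ι 𝕜 E}
    (b' : HilbertBasis κ 𝕜 E) {s : ℝ} (h : HasSum (fun i => ‖A (b i)‖ ^ 2) s) :
    HasSum (fun j => ‖A (b' j)‖ ^ 2) s := by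
  lift s to ℝ≥0 using h.nonneg fun _ => sq_nonneg _
  rw [hasSum_norm_sq_iff_tsum_enorm_sq] at h ⊢
  rwa [← A.tsum_enorm_apply_sq_eq_of_hilbertBasis b]

end ContinuousLinearMap

end HilbertSchmidt

section LpHilbertBasis

variable {𝕜 ι κ E : Type*} [RCLike 𝕜] [NormedAddCommGroup E] [InnerProductSpace 𝕜 E]
  [DecidableEq ι]

theorem HilbertBasis.orthonormal_lpSingle (b : HilbertBasis κ 𝕜 E) :
    Orthonormal 𝕜 fun p : ι × κ => lp.single (E := fun _ : ι => E) 2 p.1 (b p.2) := by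
  classical
  rw [orthonormal_iff_ite]
  rintro ⟨k, i⟩ ⟨k', i'⟩
  rw [lp.inner_single_left]
  by_cases h : k = k'
  · subst h
    simpa [Prod.ext_iff] using orthonormal_iff_ite.1 b.orthonormal i i'
  · simp [h]

theorem HilbertBasis.orthogonal_span_lpSingle_eq_bot (b : HilbertBasis κ 𝕜 E) :
    (Submodule.span 𝕜
      (Set.range fun p : ι × κ => lp.single (E := fun _ : ι => E) 2 p.1 (b p.2)))ᗮ = ⊥ := by
  refine (Submodule.eq_bot_iff _).2 fun f hf => lp.ext <| funext fun k => ?_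
  have hinner (i : κ) : ⟪b i, f k⟫_𝕜 = 0 := by
    simpa [lp.inner_single_left] using Submodule.inner_right_of_mem_orthogonal
      (Submodule.subset_span (Set.mem_range_self (k, i))) hf
  rw [lp.coeFn_zero, Pi.zero_apply, ← b.repr.map_eq_zero_iff]
  exact lp.ext <| funext fun i => by simpa [b.repr_apply_apply] using hinner i

variable [CompleteSpace E]

def HilbertBasis.lpSingle (b : HilbertBasis κ 𝕜 E) :
    HilbertBasis (ι × κ) 𝕜 (lp (fun _ : ι => E) 2) :=
  .mkOfOrthogonalEqBot b.orthonormal_lpSingle b.orthogonal_span_lpSingle_eq_bot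

theorem HilbertBasis.lpSingle_apply (b : HilbertBasis κ 𝕜 E) (p : ι × κ) :
    b.lpSingle p = lp.single 2 p.1 (b p.2) := by
  rw [HilbertBasis.lpSingle, HilbertBasis.coe_mkOfOrthogonalEqBot]

end LpHilbertBasis

theorem lp.mapCLM_single {𝕜 α : Type*} {E F : α → Type*} [NontriviallyNormedField 𝕜]
    [∀ i, NormedAddCommGroup (E i)] [∀ i, NormedSpace 𝕜 (E i)]
    [∀ i, NormedAddCommGroup (F i)] [∀ i, NormedSpace 𝕜 (F i)] [DecidableEq α]
    (p : ℝ≥0∞) [Fact (1 ≤ p)] (T : ∀ i, E i →L[𝕜] F i) {K : ℝ} (hK : 0 ≤ K)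
    (hTK : ∀ i, ‖T i‖ ≤ K) (i : α) (x : E i) :
    lp.mapCLM p T hK hTK (lp.single p i x) = lp.single p i (T i x) := by
  ext j
  simpa using Pi.apply_single (fun i => T i) (fun i => map_zero _) i x j

theorem HilbertBasis.hasSum_norm_mapCLM_smul_lpSingle_sq {𝕜 ι κ E F : Type*} [RCLike 𝕜]
    [NormedAddCommGroup E] [InnerProductSpace 𝕜 E] [CompleteSpace E]
    [NormedAddCommGroup F] [NormedSpace 𝕜 F] [DecidableEq ι]
    (b : HilbertBasis κ 𝕜 E) (T : E →L[𝕜] F) {w : ι → 𝕜} {K : ℝ} (hK : 0 ≤ K)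
    (hwK : ∀ k, ‖w k • T‖ ≤ K) {S W : ℝ} (hT : HasSum (fun i => ‖T (b i)‖ ^ 2) S)
    (hw : HasSum (fun k => ‖w k‖ ^ 2) W) :
    HasSum (fun p => ‖lp.mapCLM 2 (fun k => w k • T) hK hwK (b.lpSingle p)‖ ^ 2) (S * W) := by
  have hnorm (p : ι × κ) : ‖lp.mapCLM 2 (fun k => w k • T) hK hwK (b.lpSingle p)‖ ^ 2
      = ‖w p.1‖ ^ 2 * ‖T (b p.2)‖ ^ 2 := by
    rw [b.lpSingle_apply, lp.mapCLM_single, lp.norm_single (by norm_num),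
      smul_apply, norm_smul, mul_pow]
  simp_rw [hnorm]
  rw [mul_comm]
  exact hw.mul hT (hw.summable.mul_of_nonneg hT.summable (fun _ => by positivity)
    fun _ => by positivity)

/-- key quantitative content of Theorem `seqgelfand`: if the inclusion
`T : N_{p+1} → N_p` of the Gel'fand-triple chain is Hilbert–Schmidt (with
∑_i ‖T e_i‖² = S for an orthonormal basis (e_i) of N_{p+1}), then the induced inclusion
ℓ²_{p+1}(N_{p+1}) ↪ ℓ²_p(N_p) — which, under the canonical weight isometries
ℓ²_q(K) ≅ ℓ²(K), f ↦ (l^q f_l), corresponds to the operator g ↦ (l ↦ l⁻¹ • T (g_l)) on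
plain ℓ² sequence spaces (positions l = 1, 2, … encoded by k+1 for k : ℕ) — is a bounded
operator which is again Hilbert–Schmidt, with Hilbert–Schmidt norm squared equal to
S · ∑_l l⁻², for every orthonormal (Hilbert) basis of the domain. -/
theorem weighted_inclusion_hilbertSchmidt
    (E F : Type*) [NormedAddCommGroup E] [InnerProductSpace ℝ E] [CompleteSpace E]
    [NormedAddCommGroup F] [InnerProductSpace ℝ F] [CompleteSpace F]
    (T : E →L[ℝ] F) (e : HilbertBasis ℕ ℝ E) (S : ℝ)
    (hT : HasSum (fun i : ℕ => ‖T (e i)‖ ^ 2) S) :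
    ∃ Φ : lp (fun _ : ℕ => E) 2 →L[ℝ] lp (fun _ : ℕ => F) 2,
      (∀ (g : lp (fun _ : ℕ => E) 2) (k : ℕ),
        (Φ g : ∀ _ : ℕ, F) k = (((k : ℝ) + 1)⁻¹) • T ((g : ∀ _ : ℕ, E) k)) ∧
      ∀ B : HilbertBasis (ℕ × ℕ) ℝ (lp (fun _ : ℕ => E) 2),
        HasSum (fun p : ℕ × ℕ => ‖Φ (B p)‖ ^ 2)
          (S * ∑' l : ℕ, (((l : ℝ) + 1) ^ 2)⁻¹) := by
  have hweight_le (k : ℕ) : ‖((k : ℝ) + 1)⁻¹ • T‖ ≤ ‖T‖ := by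
    rw [norm_smul]
    refine mul_le_of_le_one_left (norm_nonneg T) ?_
    rw [norm_inv, Real.norm_of_nonneg (by positivity)]
    exact inv_le_one_of_one_le₀ (by simp)
  have hweight_sum : HasSum (fun k : ℕ => ‖((k : ℝ) + 1)⁻¹‖ ^ 2)
      (∑' l : ℕ, (((l : ℝ) + 1) ^ 2)⁻¹) := by
    have hsummable : Summable fun l : ℕ => (((l : ℝ) + 1) ^ 2)⁻¹ := by
      exact_mod_cast (summable_nat_add_iff 1).2 (Real.summable_nat_pow_inv.2 one_lt_two)
    convert hsummable.hasSum using 2 with k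
    rw [norm_inv, Real.norm_of_nonneg (by positivity), inv_pow]
  let Φ := lp.mapCLM 2 (fun k : ℕ => ((k : ℝ) + 1)⁻¹ • T) (norm_nonneg T) hweight_le
  refine ⟨Φ, fun g k => rfl, fun B => ?_⟩
  exact Φ.hasSum_norm_apply_sq_of_hilbertBasis B
    (e.hasSum_norm_mapCLM_smul_lpSingle_sq T _ hweight_le hT hweight_sum)
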